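/- Let w be a universal Lyndon word of degree n and let u be a cyclic factor of w. For every conjugate v of w, letting ◂_v be the (unique) total order on Σ_n with respect to which v is a Lyndon word: u is a prefix of v if and only if ◂_v extends the partial order ⊲_u defined by u. -/

import Mathlib

/-- `v` is a conjugate (cyclic rotation) of `w` : `w = w₁w₂` and `v = w₂w₁`. -/
def IsConjugate {α : Type*} (w v : List α) : Prop :=
  ∃ w₁ w₂ : List α, w = w₁ ++ w₂ ∧ v = w₂ ++ w₁

/-- `u` is a cyclic factor of `w` : `u` is a factor of `ww` and `|u| ≤ |w|`. -/
def IsCyclicFactor {α : Type*} (w u : List α) : Prop :=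
  u <:+: (w ++ w) ∧ u.length ≤ w.length

/-- The number of occurrences of `u` as a cyclic factor of `w`, i.e. the number of
occurrences of `u` in `ww` beginning at one of the first `|w|` positions. -/
def cyclicOcc {α : Type*} [DecidableEq α] (w u : List α) : ℕ :=
  ((Finset.range w.length).filter fun i => u <+: (w ++ w).drop i).card

/-- `w` is lexicographically strictly smaller, with respect to the lexicographic order
induced by the order `r` on the letters, than all of its proper conjugates. -/
def IsLyndonWith {n : ℕ} (r : Fin n → Fin n → Prop) (w : List (Fin n)) : Prop :=
  ∀ w₁ w₂ : List (Fin n), w = w₁ ++ w₂ → w₁ ≠ [] → w₂ ≠ [] →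
    List.Lex r w (w₂ ++ w₁)

/-- `w` is a Lyndon word: it is Lyndon with respect to some total order on the alphabet. -/
def IsLyndon {n : ℕ} (w : List (Fin n)) : Prop :=
  ∃ r : Fin n → Fin n → Prop, IsStrictTotalOrder (Fin n) r ∧ IsLyndonWith r w

/-- A universal Lyndon word of degree `n` : a word over `Σ_n` of length `n!`
all of whose conjugates are Lyndon words. -/
def IsULW (n : ℕ) (w : List (Fin n)) : Prop :=
  w.length = Nat.factorial n ∧ ∀ v, IsConjugate w v → IsLyndon v

/-- The partial alphabet order `⊲_u` defined by the word `u` : `i ⊲_u j` iff `i` occurs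
in `u` and either `j` does not occur in `u`, or the first occurrence of `i` in `u`
precedes the first occurrence of `j` in `u`. -/
def wordOrder {n : ℕ} (u : List (Fin n)) (i j : Fin n) : Prop :=
  i ∈ u ∧ u.idxOf i < u.idxOf j

/-!
A universal Lyndon word `w` has `n!` pairwise distinct conjugates, and no two of them are Lyndon
for the same order, since a Lyndon word is the least of its conjugates. Counting orders, every
conjugate is Lyndon for exactly one order.

If two conjugates `ρ a s` and `ρ b t` of `w` branch after a common prefix `ρ`, then `b ∉ ρ`:
otherwise rotating both to an occurrence of `b` in `ρ` gives conjugates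
`b ρ₂ a s ρ₁ < b ρ₂ b t ρ₁`, whose Lyndon order puts `a` below `b`, although the first letter `b`
of a Lyndon word is below all the others.

So if `v` is Lyndon for `r`, every proper conjugate first differs from `v` at letters `a` (in `v`)
and `b` with `r a b`, where `a` occurs in `v` before `b` does. Hence `v` is also Lyndon for the
order comparing letters by first occurrence in `v` and breaking ties by `r`; by uniqueness this
order is `r`, which gives the forward implication. Conversely, a cyclic factor `u` is a prefix of
some conjugate `T`; if it is not a prefix of `v`, the letters `a` of `v` and `b` of `T` where they
branch satisfy `r a b` but `b ⊲_u a`.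
-/

open List

theorem List.lex_append_left_iff {α : Type*} {r : α → α → Prop} [Std.Irrefl r] (p : List α)
    {l₁ l₂ : List α} : Lex r (p ++ l₁) (p ++ l₂) ↔ Lex r l₁ l₂ := by
  induction p with
  | nil => rfl
  | cons a p ih => rw [cons_append, cons_append, lex_cons_iff, ih]

theorem List.Lex.exists_eq_append_cons {α : Type*} {r : α → α → Prop} {l₁ l₂ : List α}
    (h : Lex r l₁ l₂) (hlen : l₁.length = l₂.length) :
    ∃ p a s b t, l₁ = p ++ a :: s ∧ l₂ = p ++ b :: t ∧ r a b := by
  induction h with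
  | nil => simp at hlen
  | @rel a s b t hab => exact ⟨[], a, s, b, t, rfl, rfl, hab⟩
  | @cons c s t _ ih =>
    obtain ⟨p, a, s', b, t', rfl, rfl, hab⟩ := ih (by simpa using hlen)
    exact ⟨c :: p, a, s', b, t', rfl, rfl, hab⟩

theorem List.idxOf_lt_idxOf_append_cons {α : Type*} [DecidableEq α] {p s : List α} {a b : α}
    (ha : a ∉ p) (hb : b ∉ p) (hab : a ≠ b) :
    (p ++ a :: s).idxOf a < (p ++ a :: s).idxOf b := by
  rw [idxOf_append_of_notMem ha, idxOf_append_of_notMem hb, idxOf_cons_self, idxOf_cons_ne _ hab]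
  omega

theorem List.IsPrefix.idxOf_lt_idxOf {α : Type*} [DecidableEq α] {u v : List α} {i j : α}
    (h : u <+: v) (hi : i ∈ u) (hij : u.idxOf i < u.idxOf j) : v.idxOf i < v.idxOf j := by
  rw [← h.idxOf_eq_of_mem hi]
  exact hij.trans_le (h.idxOf_le j)

theorem Relator.LeftUnique.rightUnique_of_card_le {α β : Type*} [Fintype α] [Fintype β]
    {P : α → β → Prop} (huniq : Relator.LeftUnique P) (htot : Relator.LeftTotal P)
    (hcard : Fintype.card β ≤ Fintype.card α) : Relator.RightUnique P := by
  choose f hf using htot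
  have hinj : Function.Injective f := fun a a' h => huniq (hf a) (h ▸ hf a')
  have hsurj := ((Fintype.bijective_iff_injective_and_card f).mpr
    ⟨hinj, le_antisymm (Fintype.card_le_of_injective f hinj) hcard⟩).2
  have hf_unique : ∀ a b, P a b → b = f a := fun a b hb => by
    obtain ⟨a', rfl⟩ := hsurj b
    rw [huniq (hf a') hb]
  intro a b b' hb hb'
  rw [hf_unique a b hb, hf_unique a b' hb']

theorem exists_equiv_fin_rel_iff_lt {α : Type*} [Fintype α] (r : α → α → Prop)
    [IsStrictTotalOrder α r] : ∃ σ : α ≃ Fin (Fintype.card α), ∀ x y, r x y ↔ σ x < σ y := by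
  classical
  let := linearOrderOfSTO r
  exact ⟨(Fintype.orderIsoFinOfCardEq α rfl).symm.toEquiv,
    fun x y => (Fintype.orderIsoFinOfCardEq α rfl).symm.lt_iff_lt.symm⟩

theorem isStrictTotalOrder_lex_comap {α β : Type*} [LinearOrder β] (f : α → β)
    (r : α → α → Prop) [IsStrictTotalOrder α r] :
    IsStrictTotalOrder α (fun x y => f x < f y ∨ f x = f y ∧ r x y) where
  irrefl x h := h.elim (lt_irrefl _) (fun h => irrefl_of r x h.2)
  trans x y z := by
    rintro (hxy | ⟨hxy, rxy⟩) (hyz | ⟨hyz, ryz⟩)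
    · exact .inl (hxy.trans hyz)
    · exact .inl (hyz ▸ hxy)
    · exact .inl (hxy ▸ hyz)
    · exact .inr ⟨hxy.trans hyz, trans_of r rxy ryz⟩
  trichotomous x y hxy hyx := by
    have hf : f x = f y :=
      le_antisymm (not_lt.mp fun h => hyx (.inl h)) (not_lt.mp fun h => hxy (.inl h))
    exact Std.Trichotomous.trichotomous (r := r) x y (fun h => hxy (.inr ⟨hf, h⟩))
      (fun h => hyx (.inr ⟨hf.symm, h⟩))

theorem isConjugate_iff_isRotated {α : Type*} {w v : List α} : IsConjugate w v ↔ w ~r v := by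
  constructor
  · rintro ⟨w₁, w₂, rfl, rfl⟩
    exact isRotated_append
  · rintro ⟨k, rfl⟩
    exact ⟨_, _, (take_append_drop (k % w.length) w).symm, rotate_eq_drop_append_take_mod⟩

theorem IsConjugate.symm {α : Type*} {w v : List α} (h : IsConjugate w v) : IsConjugate v w :=
  isConjugate_iff_isRotated.mpr (isConjugate_iff_isRotated.mp h).symm

theorem IsConjugate.trans {α : Type*} {w v t : List α} (h₁ : IsConjugate w v)
    (h₂ : IsConjugate v t) : IsConjugate w t :=
  isConjugate_iff_isRotated.mpr
    ((isConjugate_iff_isRotated.mp h₁).trans (isConjugate_iff_isRotated.mp h₂))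

theorem IsConjugate.length_eq {α : Type*} {w v : List α} (h : IsConjugate w v) :
    w.length = v.length :=
  (isConjugate_iff_isRotated.mp h).perm.length_eq

theorem IsConjugate.exists_fin_rotate_eq {α : Type*} {w v : List α} (hw : w ≠ [])
    (h : IsConjugate w v) : ∃ k : Fin w.length, w.rotate k = v := by
  obtain ⟨k, rfl⟩ := isConjugate_iff_isRotated.mp h
  exact ⟨⟨k % w.length, Nat.mod_lt _ (length_pos_iff.mpr hw)⟩, rotate_mod w k⟩

theorem IsCyclicFactor.exists_isConjugate_isPrefix {α : Type*} {w u : List α}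
    (hu : IsCyclicFactor w u) : ∃ T, IsConjugate w T ∧ u <+: T := by
  obtain ⟨⟨s, t, hst⟩, hlen⟩ := hu
  have hdrop : (w ++ w).drop s.length = u ++ t := by rw [← hst, append_assoc, drop_left]
  obtain ⟨k, hk, hpre⟩ : ∃ k ≤ w.length, u <+: w.drop k ++ w := by
    rcases le_or_gt s.length w.length with hs | hs
    · refine ⟨s.length, hs, ?_⟩
      rw [← drop_append_of_le_length hs, hdrop]
      exact prefix_append u t
    · have := congrArg length hst
      simp only [length_append] at this
      refine ⟨s.length - w.length, by omega, ?_⟩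
      have : (w ++ w).drop s.length = w.drop (s.length - w.length) := by
        rw [drop_append, drop_eq_nil_of_le hs.le, nil_append]
      exact (this ▸ hdrop ▸ prefix_append u t).trans (prefix_append _ w)
  refine ⟨w.drop k ++ w.take k, ⟨_, _, (take_append_drop k w).symm, rfl⟩, ?_⟩
  exact prefix_of_prefix_length_le hpre ((prefix_append_right_inj _).mpr (take_prefix k w))
    (by simp; omega)

section Lyndon

variable {n : ℕ} {r : Fin n → Fin n → Prop}

theorem IsLyndonWith.mono {s : Fin n → Fin n → Prop} {v : List (Fin n)}
    (h : ∀ x y, r x y → s x y) (hv : IsLyndonWith r v) : IsLyndonWith s v :=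
  fun v₁ v₂ hsplit h₁ h₂ => Lex.imp h _ _ (hv v₁ v₂ hsplit h₁ h₂)

theorem IsLyndonWith.lex_of_isConjugate {v T : List (Fin n)} (hv : IsLyndonWith r v)
    (hT : IsConjugate v T) (hne : T ≠ v) : Lex r v T := by
  obtain ⟨v₁, v₂, rfl, rfl⟩ := hT
  refine hv v₁ v₂ rfl ?_ ?_ <;> rintro rfl <;> simp at hne

theorem IsLyndonWith.rotate_ne [Std.Irrefl r] {v : List (Fin n)} (hv : IsLyndonWith r v)
    {k : ℕ} (hk₀ : 0 < k) (hk : k < v.length) : v.rotate k ≠ v := by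
  intro h
  have hlex := hv (v.take k) (v.drop k) (take_append_drop k v).symm
    (ne_nil_of_length_pos (by simp; omega)) (ne_nil_of_length_pos (by simp; omega))
  rw [← rotate_eq_drop_append_take hk.le, h] at hlex
  exact lex_irrefl (irrefl_of r) v hlex

theorem IsLyndonWith.eq_of_isConjugate [Std.Asymm r] {t₁ t₂ : List (Fin n)}
    (h₁ : IsLyndonWith r t₁) (h₂ : IsLyndonWith r t₂) (h : IsConjugate t₁ t₂) : t₁ = t₂ := by
  by_contra hne
  exact lex_asymm (fun h h' => asymm_of r h h') (h₁.lex_of_isConjugate h (Ne.symm hne))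
    (h₂.lex_of_isConjugate h.symm hne)

theorem IsLyndonWith.rel_head [Std.Irrefl r] {a b : Fin n} {v : List (Fin n)}
    (hv : IsLyndonWith r (b :: v)) (ha : a ∈ v) (hab : a ≠ b) : r b a := by
  obtain ⟨s, t, rfl⟩ := append_of_mem ha
  have hlex := hv (b :: s) (a :: t) (by simp) (by simp) (by simp)
  rw [cons_append, cons_lex_cons_iff] at hlex
  exact hlex.resolve_right fun h => hab h.1.symm

end Lyndon

namespace IsULW

variable {n : ℕ} {w : List (Fin n)}

theorem ne_nil (hw : IsULW n w) : w ≠ [] := by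
  rintro rfl
  exact (Nat.factorial_pos n).ne' (hw.1.symm.trans rfl)

theorem eq_of_rotate_eq (hw : IsULW n w) {i j : ℕ} (hi : i < w.length) (hj : j < w.length)
    (h : w.rotate i = w.rotate j) : i = j := by
  wlog hij : i < j generalizing i j
  · rcases (not_lt.mp hij).eq_or_lt with rfl | hji
    · rfl
    · exact (this hj hi h.symm hji).symm
  obtain ⟨q, hq, hl⟩ := hw.2 (w.rotate i) (isConjugate_iff_isRotated.mpr ⟨i, rfl⟩)
  refine absurd ?_ (hl.rotate_ne (k := j - i) (by omega) (by simp; omega))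
  rw [rotate_rotate, Nat.add_sub_cancel' hij.le, h]

theorem rel_iff_of_isLyndonWith (hw : IsULW n w) {v : List (Fin n)} (hv : IsConjugate w v)
    {r₁ r₂ : Fin n → Fin n → Prop} [IsStrictTotalOrder (Fin n) r₁]
    [IsStrictTotalOrder (Fin n) r₂] (h₁ : IsLyndonWith r₁ v) (h₂ : IsLyndonWith r₂ v)
    (x y : Fin n) : r₁ x y ↔ r₂ x y := by
  obtain ⟨k, rfl⟩ := hv.exists_fin_rotate_eq hw.ne_nil
  -- orders are encoded as bijections with `Fin n`, so that there are `n!` of them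
  let P (k : Fin w.length) (σ : Fin n ≃ Fin (Fintype.card (Fin n))) : Prop :=
    IsLyndonWith (fun x y => σ x < σ y) (w.rotate k)
  have hconj (k : Fin w.length) : IsConjugate w (w.rotate k) :=
    isConjugate_iff_isRotated.mpr ⟨k, rfl⟩
  have htot : Relator.LeftTotal P := fun k => by
    obtain ⟨q, hq, hl⟩ := hw.2 _ (hconj k)
    obtain ⟨σ, hσ⟩ := exists_equiv_fin_rel_iff_lt q
    exact ⟨σ, hl.mono fun x y => (hσ x y).mp⟩
  have huniq : Relator.LeftUnique P := fun k k' σ hk hk' => by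
    have : Std.Asymm fun x y : Fin n => σ x < σ y := ⟨fun _ _ => lt_asymm⟩
    exact Fin.ext (hw.eq_of_rotate_eq k.2 k'.2
      (hk.eq_of_isConjugate hk' ((hconj k).symm.trans (hconj k'))))
  have hcard :
      Fintype.card (Fin n ≃ Fin (Fintype.card (Fin n))) ≤ Fintype.card (Fin w.length) := by
    rw [Fintype.card_equiv (Fintype.equivFin _), Fintype.card_fin, Fintype.card_fin, hw.1]
  obtain ⟨σ₁, hσ₁⟩ := exists_equiv_fin_rel_iff_lt r₁
  obtain ⟨σ₂, hσ₂⟩ := exists_equiv_fin_rel_iff_lt r₂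
  have hσ : σ₁ = σ₂ := huniq.rightUnique_of_card_le htot hcard
    (h₁.mono fun x y => (hσ₁ x y).mp) (h₂.mono fun x y => (hσ₂ x y).mp)
  rw [hσ₁, hσ₂, hσ]

theorem notMem_of_branch (hw : IsULW n w) {ρ s t : List (Fin n)} {a b : Fin n}
    (hv : IsConjugate w (ρ ++ a :: s)) (hT : IsConjugate w (ρ ++ b :: t)) (hab : a ≠ b) :
    b ∉ ρ := by
  intro hb
  obtain ⟨ρ₁, ρ₂, rfl⟩ := append_of_mem hb
  have hU₁ : IsConjugate w (b :: (ρ₂ ++ a :: (s ++ ρ₁))) :=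
    hv.trans ⟨ρ₁, b :: ρ₂ ++ a :: s, by simp, by simp⟩
  have hU₂ : IsConjugate w (b :: (ρ₂ ++ b :: (t ++ ρ₁))) :=
    hT.trans ⟨ρ₁, b :: ρ₂ ++ b :: t, by simp, by simp⟩
  obtain ⟨q, hq, hl⟩ := hw.2 _ hU₁
  have hlex := hl.lex_of_isConjugate (hU₁.symm.trans hU₂) (by simp [hab.symm])
  rw [lex_cons_iff, lex_append_left_iff, cons_lex_cons_iff] at hlex
  exact asymm_of q (hlex.resolve_right fun h => hab h.1) (hl.rel_head (by simp) hab)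

theorem isLyndonWith_idxOf_lex (hw : IsULW n w) {v : List (Fin n)} (hv : IsConjugate w v)
    {r : Fin n → Fin n → Prop} [IsStrictTotalOrder (Fin n) r] (hl : IsLyndonWith r v) :
    IsLyndonWith (fun x y => v.idxOf x < v.idxOf y ∨ v.idxOf x = v.idxOf y ∧ r x y) v := by
  intro v₁ v₂ hsplit h₁ h₂
  obtain ⟨p, a, s, b, t, hva, hvb, hab⟩ :=
    (hl v₁ v₂ hsplit h₁ h₂).exists_eq_append_cons (by simp [hsplit, Nat.add_comm])
  have hT : IsConjugate w (p ++ b :: t) := hvb ▸ hv.trans ⟨v₁, v₂, hsplit, rfl⟩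
  have hne : a ≠ b := fun h => irrefl_of r a (h ▸ hab)
  have ha := hw.notMem_of_branch hT (hva ▸ hv) hne.symm
  have hb := hw.notMem_of_branch (hva ▸ hv) hT hne
  rw [hvb]
  subst hva
  exact Lex.append_left _ (Lex.rel (.inl (idxOf_lt_idxOf_append_cons ha hb hne))) p

theorem rel_of_idxOf_lt (hw : IsULW n w) {v : List (Fin n)} (hv : IsConjugate w v)
    {r : Fin n → Fin n → Prop} [IsStrictTotalOrder (Fin n) r] (hl : IsLyndonWith r v)
    {i j : Fin n} (hij : v.idxOf i < v.idxOf j) : r i j := by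
  have := isStrictTotalOrder_lex_comap v.idxOf r
  exact (hw.rel_iff_of_isLyndonWith hv hl (hw.isLyndonWith_idxOf_lex hv hl) i j).mpr (.inl hij)

theorem isPrefix_of_forall_wordOrder (hw : IsULW n w) {u v : List (Fin n)}
    (hu : IsCyclicFactor w u) (hv : IsConjugate w v) {r : Fin n → Fin n → Prop}
    [IsStrictTotalOrder (Fin n) r] (hl : IsLyndonWith r v)
    (hext : ∀ i j, wordOrder u i j → r i j) : u <+: v := by
  by_contra hnp
  obtain ⟨T, hT, huT⟩ := hu.exists_isConjugate_isPrefix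
  have hTv : T ≠ v := by rintro rfl; exact hnp huT
  obtain ⟨p, a, s, b, t, rfl, rfl, hab⟩ :=
    (hl.lex_of_isConjugate (hv.symm.trans hT) hTv).exists_eq_append_cons
      (hv.length_eq.symm.trans hT.length_eq)
  have hne : a ≠ b := fun h => irrefl_of r a (h ▸ hab)
  have ha := hw.notMem_of_branch hT hv hne.symm
  have hb := hw.notMem_of_branch hv hT hne
  have hpu : p.length < u.length := by
    by_contra! hup
    exact hnp ((prefix_of_prefix_length_le huT (prefix_append p _) hup).trans (prefix_append p _))
  have hpbu : p ++ [b] <+: u :=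
    prefix_of_prefix_length_le (by simp) huT (by simp; omega)
  have hba : wordOrder u b a :=
    ⟨hpbu.subset (by simp),
      hpbu.idxOf_lt_idxOf (by simp) (idxOf_lt_idxOf_append_cons hb ha hne.symm)⟩
  exact asymm_of r hab (hext b a hba)

end IsULW

/-- Proposition: let `w` be a ULW, `u` a cyclic factor of `w`, and `v` a conjugate of `w`
that is Lyndon with respect to the total order `r`. Then `u` is a prefix of `v` iff `r`
extends the partial order `⊲_u` defined by `u`. -/
theorem stmt_6 (n : ℕ) (w u v : List (Fin n)) (hw : IsULW n w)
    (hu : IsCyclicFactor w u) (hv : IsConjugate w v)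
    (r : Fin n → Fin n → Prop) (hr : IsStrictTotalOrder (Fin n) r)
    (hLyndon : IsLyndonWith r v) :
    u <+: v ↔ ∀ i j : Fin n, wordOrder u i j → r i j :=
  ⟨fun huv _ _ ⟨hi, hij⟩ => hw.rel_of_idxOf_lt hv hLyndon (huv.idxOf_lt_idxOf hi hij),
    hw.isPrefix_of_forall_wordOrder hu hv hLyndon⟩
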